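/- Let r_1 be the convex hull of q_1,...,q_8 as above, and let r_3 be the image of r_1 under rotation about the z-axis by angle -2π/3. Then r_1 and r_3 are disjoint. -/
import Mathlib


open Real

/-- The eight corner points of the red polygon `r₁`, lying in the plane `y = 2√3`. -/
noncomputable def q : Fin 8 → ℝ × ℝ × ℝ :=
  ![(8, 2 * sqrt 3, -0.6), (8, 2 * sqrt 3, -0.4),
    (0.08, 2 * sqrt 3, 1.1815), (0, 2 * sqrt 3, 1.1814),
    (-8, 2 * sqrt 3, 0.6), (-8, 2 * sqrt 3, 0.4),
    (-0.08, 2 * sqrt 3, -1.1815), (0, 2 * sqrt 3, -1.1814)]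

/-- Rotation about the z-axis by angle `-2π/3`. -/
noncomputable def rot (v : ℝ × ℝ × ℝ) : ℝ × ℝ × ℝ :=
  (-v.1 / 2 + (sqrt 3 / 2) * v.2.1, -(sqrt 3 / 2) * v.1 - v.2.1 / 2, v.2.2)

/-- Separating linear functional. -/
noncomputable def fsep (v : ℝ × ℝ × ℝ) : ℝ :=
  (999 / 5000) * (v.1 - sqrt 3 * v.2.1) + v.2.2

/-- Pullback of `fsep` along `rot`. -/
noncomputable def gsep (v : ℝ × ℝ × ℝ) : ℝ :=
  (999 / 5000) * (v.1 + sqrt 3 * v.2.1) + v.2.2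

lemma sqrt3_sq : sqrt 3 * sqrt 3 = 3 := Real.mul_self_sqrt (by norm_num)

lemma fsep_rot (v : ℝ × ℝ × ℝ) : fsep (rot v) = gsep v := by
  simp only [fsep, gsep, rot]
  linear_combination (999 / 5000) * v.1 / 2 * sqrt3_sq

lemma fsep_linear : IsLinearMap ℝ fsep := by
  constructor
  · intro x y; simp only [fsep, Prod.fst_add, Prod.snd_add]; ring
  · intro c x; simp only [fsep, Prod.smul_fst, Prod.smul_snd, smul_eq_mul]; ring

lemma gsep_linear : IsLinearMap ℝ gsep := by
  constructor
  · intro x y; simp only [gsep, Prod.fst_add, Prod.snd_add]; ring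
  · intro c x; simp only [gsep, Prod.smul_fst, Prod.smul_snd, smul_eq_mul]; ring

lemma hull_f : convexHull ℝ (Set.range q) ⊆ {v | fsep v < 0} := by
  apply convexHull_min _ (convex_halfSpace_lt fsep_linear 0)
  rw [Set.range_subset_iff]
  intro i
  fin_cases i
  · show fsep (8, 2 * sqrt 3, -0.6) < 0
    simp only [fsep]
    nlinarith [sqrt3_sq]
  · show fsep (8, 2 * sqrt 3, -0.4) < 0
    simp only [fsep]
    nlinarith [sqrt3_sq]
  · show fsep (0.08, 2 * sqrt 3, 1.1815) < 0
    simp only [fsep]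
    nlinarith [sqrt3_sq]
  · show fsep (0, 2 * sqrt 3, 1.1814) < 0
    simp only [fsep]
    nlinarith [sqrt3_sq]
  · show fsep (-8, 2 * sqrt 3, 0.6) < 0
    simp only [fsep]
    nlinarith [sqrt3_sq]
  · show fsep (-8, 2 * sqrt 3, 0.4) < 0
    simp only [fsep]
    nlinarith [sqrt3_sq]
  · show fsep (-0.08, 2 * sqrt 3, -1.1815) < 0
    simp only [fsep]
    nlinarith [sqrt3_sq]
  · show fsep (0, 2 * sqrt 3, -1.1814) < 0
    simp only [fsep]
    nlinarith [sqrt3_sq]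

lemma hull_g : convexHull ℝ (Set.range q) ⊆ {v | 0 < gsep v} := by
  apply convexHull_min _ (convex_halfSpace_gt gsep_linear 0)
  rw [Set.range_subset_iff]
  intro i
  fin_cases i
  · show 0 < gsep (8, 2 * sqrt 3, -0.6)
    simp only [gsep]
    nlinarith [sqrt3_sq]
  · show 0 < gsep (8, 2 * sqrt 3, -0.4)
    simp only [gsep]
    nlinarith [sqrt3_sq]
  · show 0 < gsep (0.08, 2 * sqrt 3, 1.1815)
    simp only [gsep]
    nlinarith [sqrt3_sq]
  · show 0 < gsep (0, 2 * sqrt 3, 1.1814)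
    simp only [gsep]
    nlinarith [sqrt3_sq]
  · show 0 < gsep (-8, 2 * sqrt 3, 0.6)
    simp only [gsep]
    nlinarith [sqrt3_sq]
  · show 0 < gsep (-8, 2 * sqrt 3, 0.4)
    simp only [gsep]
    nlinarith [sqrt3_sq]
  · show 0 < gsep (-0.08, 2 * sqrt 3, -1.1815)
    simp only [gsep]
    nlinarith [sqrt3_sq]
  · show 0 < gsep (0, 2 * sqrt 3, -1.1814)
    simp only [gsep]
    nlinarith [sqrt3_sq]

/-- The red polygon `r₁` (the convex hull of `q 0, …, q 7`) and its image `r₃` under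
rotation about the z-axis by `-2π/3` are disjoint. -/
theorem r1_r3_disjoint :
    Disjoint (convexHull ℝ (Set.range q)) (rot '' convexHull ℝ (Set.range q)) := by
  rw [Set.disjoint_left]
  rintro v hv ⟨u, hu, rfl⟩
  have h1 : fsep (rot u) < 0 := hull_f hv
  have h2 : 0 < gsep u := hull_g hu
  rw [fsep_rot] at h1
  linarith
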